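/- Let VQ_n = L ⊙ R (n ≥ 2) with L = VQ^0_{n-1} and R = VQ^1_{n-1}, and let x and y be two vertices both lying in H, where H ∈ {L, R}. Then the distance between x and y in the induced subgraph H equals their distance in VQ_n. -/

import Mathlib

/-- The relation `I = {(00,00),(01,01),(10,11),(11,10)}` on pairs of bits,
where a pair `(a, b)` records two consecutive bits (higher bit first). -/
def vqCross (p q : Bool × Bool) : Prop :=
  (p = (false, false) ∧ q = (false, false)) ∨
  (p = (false, true) ∧ q = (false, true)) ∨
  (p = (true, false) ∧ q = (true, true)) ∨
  (p = (true, true) ∧ q = (true, false))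

/-- Adjacency in the varietal hypercube `VQ n`.  A vertex is a function
`Fin n → Bool`, the bit `x_k` (1-indexed, `x = x_n x_{n-1} ⋯ x_1`) being
the value at index `k - 1`; the leading bit `x_n` is at index `n - 1`. -/
def vqAdj : (n : ℕ) → (Fin n → Bool) → (Fin n → Bool) → Prop
  | 0, _, _ => False
  | 1, x, y => x ≠ y
  | (n + 2), x, y =>
    if x (Fin.last (n + 1)) = y (Fin.last (n + 1)) then
      -- both in the same copy of `VQ (n+1)`
      vqAdj (n + 1) (fun i => x i.castSucc) (fun i => y i.castSucc)
    else
      if 3 ∣ (n + 2) then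
        (∀ i : Fin (n + 2), i.val < n - 1 → x i = y i) ∧
        vqCross (x ⟨n, by omega⟩, x ⟨n - 1, by omega⟩)
          (y ⟨n, by omega⟩, y ⟨n - 1, by omega⟩)
      else
        ∀ i : Fin (n + 1), x i.castSucc = y i.castSucc

/-- The `n`-dimensional varietal hypercube `VQ_n`. -/
def varietalCube (n : ℕ) : SimpleGraph (Fin n → Bool) :=
  SimpleGraph.fromRel (vqAdj n)

/-!
Overwriting the leading bit with `b` retracts `VQ_n` onto the half `H` without increasing
distances. An edge inside a half keeps its lower `n - 1` bits, so it stays an edge. A cross edge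
becomes a loop, except when `3 ∣ n` and it joins `1a⋯` to `1ā⋯` in the bits `x_{n-1} x_{n-2}`:
then it becomes the edge flipping the single bit `x_{n-2}`, which is an ordinary hypercube edge
because `3 ∤ n - 2`. Hence every walk of `VQ_n` between vertices of `H` retracts to a walk of `H`
that is no longer.
-/

open Function

namespace SimpleGraph

variable {V W : Type*} {G : SimpleGraph V} {H : SimpleGraph W}

theorem Walk.exists_length_le_of_adj_imp (f : V → W)
    (hf : ∀ ⦃u v⦄, G.Adj u v → f u = f v ∨ H.Adj (f u) (f v)) :
    ∀ {u v : V} (p : G.Walk u v), ∃ q : H.Walk (f u) (f v), q.length ≤ p.length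
  | _, _, .nil => ⟨.nil, le_rfl⟩
  | _, _, .cons h p => by
    obtain ⟨q, hq⟩ := exists_length_le_of_adj_imp f hf p
    rcases hf h with heq | hadj
    · exact ⟨q.copy heq.symm rfl, by simp only [Walk.length_copy, Walk.length_cons]; omega⟩
    · exact ⟨.cons hadj q, by simpa using hq⟩

theorem edist_le_edist_of_adj_imp (f : V → W)
    (hf : ∀ ⦃u v⦄, G.Adj u v → f u = f v ∨ H.Adj (f u) (f v)) (u v : V) :
    H.edist (f u) (f v) ≤ G.edist u v :=
  le_iInf fun p =>
    let ⟨q, hq⟩ := p.exists_length_le_of_adj_imp f hf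
    (edist_le q).trans (by exact_mod_cast hq)

theorem dist_induce_eq_of_retraction {s : Set V} (r : V → s) (hr : ∀ v : s, r v = v)
    (hadj : ∀ ⦃u v⦄, G.Adj u v → r u = r v ∨ (G.induce s).Adj (r u) (r v)) (u v : s) :
    (G.induce s).dist u v = G.dist u v := by
  have hle : (G.induce s).edist u v ≤ G.edist u v := by
    simpa only [hr] using edist_le_edist_of_adj_imp r hadj u v
  have hge : G.edist u v ≤ (G.induce s).edist u v :=
    edist_le_edist_of_adj_imp (H := G) Subtype.val (fun _ _ h => Or.inr h) u v
  rw [dist, dist, le_antisymm hle hge]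

end SimpleGraph

theorem Function.update_eq_update_of_forall_ne {α β : Type*} [DecidableEq α] {f g : α → β}
    {a : α} (b : β) (h : ∀ x ≠ a, f x = g x) : update f a b = update g a b :=
  update_eq_iff.2 ⟨(update_self a b g).symm, fun x hx => by rw [update_of_ne hx, h x hx]⟩

theorem vqCross.fst_eq {p q : Bool × Bool} (h : vqCross p q) : p.1 = q.1 := by
  rcases h with ⟨rfl, rfl⟩ | ⟨rfl, rfl⟩ | ⟨rfl, rfl⟩ | ⟨rfl, rfl⟩ <;> rfl

theorem vqAdj_of_forall_ne_eq : ∀ {n : ℕ} {u v : Fin n → Bool} (j : Fin n),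
    ¬ 3 ∣ (j.val + 1) → u j ≠ v j → (∀ i ≠ j, u i = v i) → vqAdj n u v
  | 0, _, _, j, _, _, _ => j.elim0
  | 1, _, _, _, _, hne, _ => fun h => hne (h ▸ rfl)
  | n + 2, u, v, j, h3, hne, hagree => by
    induction j using Fin.lastCases with
    | last =>
      rw [vqAdj, if_neg hne, if_neg (show ¬ 3 ∣ n + 2 from h3)]
      exact fun i => hagree _ (Fin.castSucc_ne_last i)
    | cast j =>
      rw [vqAdj, if_pos (hagree _ (Fin.castSucc_ne_last j).symm)]
      exact vqAdj_of_forall_ne_eq j h3 hne fun i hi => hagree _ (Fin.castSucc_injective _ |>.ne hi)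

theorem vqAdj_update_last {m : ℕ} (b : Bool) {u v : Fin (m + 2) → Bool}
    (h : vqAdj (m + 2) u v) :
    update u (Fin.last (m + 1)) b = update v (Fin.last (m + 1)) b ∨
      vqAdj (m + 2) (update u (Fin.last (m + 1)) b) (update v (Fin.last (m + 1)) b) := by
  rw [vqAdj] at h
  split_ifs at h with hlast h3
  · right
    rw [vqAdj, if_pos (by simp)]
    simpa [Fin.castSucc_ne_last] using h
  · obtain ⟨hlow, hcross⟩ := h
    let j : Fin (m + 2) := ⟨m - 1, by omega⟩
    have hagree : ∀ i ≠ j, i ≠ Fin.last (m + 1) → u i = v i := by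
      intro i hij hil
      rcases lt_or_ge i.val (m - 1) with hi | hi
      · exact hlow i hi
      · have hi : i = ⟨m, by omega⟩ := by
          simp only [ne_eq, Fin.ext_iff, Fin.val_last, j] at hij hil
          ext; simp only; omega
        rw [hi]
        exact hcross.fst_eq
    by_cases hj : u j = v j
    · refine Or.inl (update_eq_update_of_forall_ne b fun i hil => ?_)
      by_cases hij : i = j
      · exact hij ▸ hj
      · exact hagree i hij hil
    · have hjl : j ≠ Fin.last (m + 1) := by simp [j, Fin.ext_iff]
      refine Or.inr (vqAdj_of_forall_ne_eq j (by simp only [j]; omega) ?_ fun i hij => ?_)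
      · simpa [update_of_ne hjl] using hj
      · by_cases hil : i = Fin.last (m + 1)
        · simp [hil]
        · simp [update_of_ne hil, hagree i hij hil]
  · refine Or.inl (update_eq_update_of_forall_ne b fun i hi => ?_)
    obtain ⟨i, rfl⟩ := Fin.exists_castSucc_eq.2 hi
    exact h i

theorem varietalCube_adj_update_last {m : ℕ} (b : Bool) {u v : Fin (m + 2) → Bool}
    (h : (varietalCube (m + 2)).Adj u v) :
    update u (Fin.last (m + 1)) b = update v (Fin.last (m + 1)) b ∨
      (varietalCube (m + 2)).Adj (update u (Fin.last (m + 1)) b)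
        (update v (Fin.last (m + 1)) b) := by
  rw [varietalCube, SimpleGraph.fromRel_adj] at h ⊢
  by_cases heq : update u (Fin.last (m + 1)) b = update v (Fin.last (m + 1)) b
  · exact Or.inl heq
  · refine Or.inr ⟨heq, h.2.imp (fun h => ?_) (fun h => ?_)⟩
    · exact (vqAdj_update_last b h).resolve_left heq
    · exact (vqAdj_update_last b h).resolve_left (Ne.symm heq)

/-- Let `VQ_n = L ⊙ R` (`n ≥ 2`) and let `x, y` both lie in `H`, where
`H ∈ {L, R}` (encoded by the common leading bit `b`).  Then the distance between
`x` and `y` in the induced subgraph `H` equals their distance in `VQ_n`. -/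
theorem stmt11 (n : ℕ) (hn : 2 ≤ n) (b : Bool) (x y : Fin n → Bool)
    (hx : x ⟨n - 1, by omega⟩ = b) (hy : y ⟨n - 1, by omega⟩ = b) :
    ((varietalCube n).induce {v : Fin n → Bool | v ⟨n - 1, by omega⟩ = b}).dist
        ⟨x, hx⟩ ⟨y, hy⟩ = (varietalCube n).dist x y := by
  obtain ⟨m, rfl⟩ : ∃ m, n = m + 2 := ⟨n - 2, by omega⟩
  refine SimpleGraph.dist_induce_eq_of_retraction
    (fun v => ⟨update v (Fin.last (m + 1)) b, update_self ..⟩)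
    (fun v => Subtype.ext (update_eq_self_iff.2 v.2.symm)) (fun u v h => ?_) _ _
  exact (varietalCube_adj_update_last b h).imp Subtype.ext id
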